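/- arXiv:2411.01100 — 3 statements merged into one kernel-verified Lean document; each statement's English description precedes it below -/
import Mathlib

section
/- Lemma 1 (Identification of the target mean potential outcome under the exponential-tilting sensitivity model). Suppose Assumptions 1 and 2 hold and the binary exponential-tilting sensitivity model with parameter γ_a ∈ ℝ holds for a given a ∈ {0,1}. Then the expected potential outcome in the target population is identified by the observed-data functional: E[Y⁽ᵃ⁾ | S=0] = E[ e^{γ_a} ρ_a(V) / ( e^{γ_a} ρ_a(V) + 1 − ρ_a(V) ) | S=0 ]. -/
open MeasureTheory ProbabilityTheory Real MeasurableSpace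
open scoped ENNReal

/-
Under ignorability on the source, the regression `μ_a(X)` fitted on `{S = 1, A = a}` is
`E[Y⁽ᵃ⁾ | X, S = 1]`: both agree on `{A = a}`, so `μ_a(X) · P(A = a | X, S = 1)` and
`E[Y⁽ᵃ⁾ | X, S = 1] · P(A = a | X, S = 1)` are each `E[Y⁽ᵃ⁾ 1{A = a} | X, S = 1]` (the second by
conditional independence), and the positive propensity factor cancels. The tower property then
gives `ρ_a(V) = r₁(V)`. Since `P(S = 1 | V) > 0`, a `V`-event that is null on the source is null
for `P`, so this identity and `0 ≤ r₁(V) ≤ 1` hold `P`-almost surely; solving the odds-ratio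
relation for `r₀` expresses `r₀(V) = E[Y⁽ᵃ⁾ | V, S = 0]` through `ρ_a(V)`, and integrating over
the target gives the formula.
-/
theorem indicator_preimage_one_eq_self {α : Type*} {f : α → ℝ} (hf : ∀ x, f x = 0 ∨ f x = 1) :
    (f ⁻¹' {1}).indicator (fun _ => 1) = f := by
  funext x
  rcases hf x with h | h <;> simp [Set.indicator, h]

theorem Measurable.integrable_of_binary {Ω : Type*} [MeasurableSpace Ω] {μ : Measure Ω}
    [IsFiniteMeasure μ] {f : Ω → ℝ} (hfm : Measurable f) (hf : ∀ ω, f ω = 0 ∨ f ω = 1) :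
    Integrable f μ :=
  Integrable.of_bound hfm.aestronglyMeasurable 1 <|
    ae_of_all _ fun ω => by rcases hf ω with h | h <;> simp [h]

theorem eq_div_of_odds_ratio_eq {c r₀ r₁ : ℝ} (hc : 0 < c) (h₀ : 0 ≤ r₁) (h₁ : r₁ ≤ 1)
    (h : r₀ * (1 - r₁) = c * (r₁ * (1 - r₀))) : r₀ = c * r₁ / (c * r₁ + 1 - r₁) := by
  have hd : 0 < c * r₁ + 1 - r₁ := by
    rcases h₀.eq_or_lt with rfl | h₀
    · norm_num
    · nlinarith [mul_pos hc h₀]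
  rw [eq_div_iff hd.ne']
  linear_combination h

namespace ProbabilityTheory

variable {Ω : Type*} {m m₀ : MeasurableSpace Ω} {μ : Measure Ω} {B : Set Ω}

theorem _root_.MeasureTheory.Integrable.cond {f : Ω → ℝ} (hf : Integrable f μ) :
    Integrable f μ[|B] := by
  by_cases h : μ B = 0
  · simp [cond_eq_zero_of_meas_eq_zero h]
  · exact hf.restrict.smul_measure (ENNReal.inv_ne_top.mpr h)

variable [IsFiniteMeasure μ]

theorem integrableOn_of_integrable_cond {f : Ω → ℝ} (hf : Integrable f μ[|B]) :
    IntegrableOn f B μ := by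
  by_cases h : μ B = 0
  · simp [IntegrableOn, Measure.restrict_eq_zero.mpr h]
  · have : μ.restrict B = μ B • μ[|B] := by
      rw [cond, smul_smul, ENNReal.mul_inv_cancel h (measure_ne_top _ _), one_smul]
    rw [IntegrableOn, this]
    exact hf.smul_measure (measure_ne_top _ _)

theorem measureReal_mul_setIntegral_cond (hB : MeasurableSet B) {s : Set Ω} (hs : MeasurableSet s)
    (f : Ω → ℝ) : μ.real B * ∫ x in s, f x ∂μ[|B] = ∫ x in s, B.indicator f x ∂μ := by
  rw [setIntegral_indicator hB]
  by_cases h : μ B = 0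
  · simp [measureReal_def, h,
      Measure.restrict_eq_zero.mpr (measure_mono_null Set.inter_subset_right h)]
  · rw [cond, Measure.restrict_smul, integral_smul_measure, Measure.restrict_restrict hs,
      ENNReal.toReal_inv, smul_eq_mul, ← mul_assoc, measureReal_def,
      mul_inv_cancel₀ (ENNReal.toReal_ne_zero.mpr ⟨h, measure_ne_top _ _⟩), one_mul]

theorem condExp_mem_Icc (hm : m ≤ m₀) {f : Ω → ℝ} (hf : Integrable f μ)
    (hf01 : ∀ᵐ ω ∂μ, f ω ∈ Set.Icc 0 1) :
    ∀ᵐ ω ∂μ, μ[f|m] ω ∈ Set.Icc 0 1 := by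
  have h₁ := condExp_mono (m := m) hf (integrable_const 1) (hf01.mono fun _ h => h.2)
  rw [condExp_const hm] at h₁
  filter_upwards [condExp_nonneg (m := m) (hf01.mono fun _ h => h.1), h₁] with ω h₀ h₁
  exact ⟨h₀, h₁⟩

theorem ae_of_ae_cond_of_condExp_pos (hm : m ≤ m₀) (hB : MeasurableSet B)
    (hpos : ∀ᵐ ω ∂μ, 0 < (μ⟦B | m⟧) ω) {p : Ω → Prop} (hp : MeasurableSet[m] {ω | p ω})
    (h : ∀ᵐ ω ∂μ[|B], p ω) : ∀ᵐ ω ∂μ, p ω := by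
  set t := {ω | p ω}ᶜ
  have hBt : μ (B ∩ t) = 0 := by
    rw [ae_iff, cond_apply hB] at h
    exact (mul_eq_zero.mp h).resolve_left (ENNReal.inv_ne_zero.mpr (measure_ne_top _ _))
  have hint : ∫ ω in t, (μ⟦B | m⟧) ω ∂μ = 0 := by
    rw [setIntegral_condExp hm ((integrable_const 1).indicator hB) hp.compl,
      setIntegral_indicator hB, setIntegral_const, Set.inter_comm, measureReal_def, hBt]
    simp
  have hzero := (setIntegral_eq_zero_iff_of_nonneg_ae
    (ae_restrict_of_ae (hpos.mono fun _ h => h.le)) integrable_condExp.integrableOn).mp hint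
  have hfalse : ∀ᵐ ω ∂μ.restrict t, False := by
    filter_upwards [hzero, ae_restrict_of_ae hpos] with ω h₁ h₂
    simp [h₁] at h₂
  have ht : μ t = 0 := by simpa using hfalse
  exact ae_iff.mpr ht

theorem condExp_indicator_eq_mul_of_ae_eq_condExp_cond (hm : m ≤ m₀) (hB : MeasurableSet B)
    {f g : Ω → ℝ} (hf : Integrable f μ) (hg : StronglyMeasurable[m] g)
    (hgf : g =ᵐ[μ[|B]] (μ[|B])[f|m]) :
    μ[B.indicator f|m] =ᵐ[μ] g * μ⟦B | m⟧ := by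
  have hg_ind : B.indicator g = g * B.indicator (fun _ => 1) := by
    funext ω; by_cases hω : ω ∈ B <;> simp [hω]
  have hgB : Integrable (B.indicator g) μ :=
    (integrableOn_of_integrable_cond (integrable_condExp.congr hgf.symm)).integrable_indicator hB
  have hpull : μ[B.indicator g|m] =ᵐ[μ] g * μ⟦B | m⟧ := by
    rw [hg_ind]
    exact condExp_mul_of_stronglyMeasurable_left hg (hg_ind ▸ hgB)
      ((integrable_const 1).indicator hB)
  refine (ae_eq_condExp_of_forall_setIntegral_eq hm (hf.indicator hB)
    (fun s _ _ => (integrable_condExp.congr hpull).integrableOn) (fun s hs _ => ?_)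
    (hg.mul stronglyMeasurable_condExp).aestronglyMeasurable).symm
  have hs₀ := hm s hs
  calc ∫ x in s, (g * μ⟦B | m⟧) x ∂μ = ∫ x in s, B.indicator g x ∂μ := by
        rw [← setIntegral_congr_ae hs₀ (hpull.mono fun _ h _ => h), setIntegral_condExp hm hgB hs]
    _ = μ.real B * ∫ x in s, g x ∂μ[|B] := (measureReal_mul_setIntegral_cond hB hs₀ g).symm
    _ = μ.real B * ∫ x in s, f x ∂μ[|B] := by
        rw [setIntegral_congr_ae hs₀ (hgf.mono fun _ h _ => h), setIntegral_condExp hm hf.cond hs]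
    _ = ∫ x in s, B.indicator f x ∂μ := measureReal_mul_setIntegral_cond hB hs₀ f

theorem ae_eq_condExp_of_condExp_indicator_eq_mul (hm : m ≤ m₀) (hB : MeasurableSet B)
    {f g : Ω → ℝ} (hf : Integrable f μ) (hg : StronglyMeasurable[m] g)
    (hgf : g =ᵐ[μ[|B]] (μ[|B])[f|m])
    (hfactor : μ[B.indicator f|m] =ᵐ[μ] μ[f|m] * μ⟦B | m⟧)
    (hpos : ∀ᵐ ω ∂μ, 0 < (μ⟦B | m⟧) ω) :
    g =ᵐ[μ] μ[f|m] := by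
  filter_upwards [condExp_indicator_eq_mul_of_ae_eq_condExp_cond hm hB hf hg hgf, hfactor, hpos]
    with ω h₁ h₂ h₃
  exact mul_right_cancel₀ h₃.ne' (h₁.symm.trans h₂)

theorem condExp_indicator_preimage_pos_of_binary (hm : m ≤ m₀) {A : Ω → ℝ} (hA : Measurable A)
    (hAbin : ∀ ω, A ω = 0 ∨ A ω = 1) (hpos : ∀ᵐ ω ∂μ, 0 < μ[A|m] ω ∧ μ[A|m] ω < 1) {a : ℝ}
    (ha : a = 0 ∨ a = 1) : ∀ᵐ ω ∂μ, 0 < (μ⟦A ⁻¹' {a} | m⟧) ω := by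
  rcases ha with rfl | rfl
  · have hcompl : A ⁻¹' {0} = (fun ω => 1 - A ω) ⁻¹' {1} := by
      ext ω; simp
    rw [hcompl, indicator_preimage_one_eq_self fun ω => by rcases hAbin ω with h | h <;> simp [h]]
    filter_upwards [condExp_sub (m := m) (integrable_const 1) (hA.integrable_of_binary hAbin), hpos]
      with ω h₁ h₂
    rw [show (fun ω => 1 - A ω) = (fun _ => (1 : ℝ)) - A from rfl, h₁, condExp_const hm]
    simpa using h₂.2
  · rw [indicator_preimage_one_eq_self hAbin]
    filter_upwards [hpos] with ω h using h.1

end ProbabilityTheory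

namespace ProbabilityTheory.CondIndepFun

variable {Ω β : Type*} {m mΩ : MeasurableSpace Ω} [StandardBorelSpace Ω] {mβ : MeasurableSpace β}
  {hm : m ≤ mΩ} {μ : Measure Ω} [IsFiniteMeasure μ]

theorem condExp_indicator_eq_mul {f : Ω → ℝ} {A : Ω → β}
    (hind : CondIndepFun m hm f A μ) (hf : Measurable f) (hfbin : ∀ ω, f ω = 0 ∨ f ω = 1)
    (hA : Measurable A) {t : Set β} (ht : MeasurableSet t) :
    μ[(A ⁻¹' t).indicator f|m] =ᵐ[μ] μ[f|m] * μ⟦A ⁻¹' t | m⟧ := by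
  have key := (condIndepFun_iff_condExp_inter_preimage_eq_mul hf hA).mp hind {1} t
    (measurableSet_singleton 1) ht
  rwa [Set.inter_comm, ← Set.indicator_indicator, indicator_preimage_one_eq_self hfbin] at key

theorem ae_eq_condExp_of_ae_eq_condExp_cond {f g A : Ω → ℝ} (hind : CondIndepFun m hm f A μ)
    (hf : Measurable f) (hfbin : ∀ ω, f ω = 0 ∨ f ω = 1) (hA : Measurable A)
    (hAbin : ∀ ω, A ω = 0 ∨ A ω = 1) (hAm : ∀ᵐ ω ∂μ, 0 < μ[A|m] ω ∧ μ[A|m] ω < 1) {a : ℝ}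
    (ha : a = 0 ∨ a = 1) (hg : StronglyMeasurable[m] g)
    (hgf : g =ᵐ[μ[|A ⁻¹' {a}]] (μ[|A ⁻¹' {a}])[f|m]) : g =ᵐ[μ] μ[f|m] :=
  ProbabilityTheory.ae_eq_condExp_of_condExp_indicator_eq_mul hm (hA (measurableSet_singleton a))
    (hf.integrable_of_binary hfbin) hg hgf
    (hind.condExp_indicator_eq_mul hf hfbin hA (measurableSet_singleton a))
    (condExp_indicator_preimage_pos_of_binary hm hA hAbin hAm ha)

end ProbabilityTheory.CondIndepFun

section Tilting

variable {Ω 𝒱 : Type*} [MeasurableSpace Ω] [MeasurableSpace 𝒱] {μ : Measure Ω} [IsFiniteMeasure μ]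

theorem ae_eq_div_of_odds_ratio_of_ae_cond {V : Ω → 𝒱} (hV : Measurable V) {B : Set Ω}
    (hB : MeasurableSet B) (hsel : ∀ᵐ ω ∂μ, 0 < (μ⟦B | MeasurableSpace.comap V inferInstance⟧) ω)
    {c : ℝ} (hc : 0 < c) {r₀ r₁ ρ : 𝒱 → ℝ} (hr₀ : Measurable r₀) (hr₁ : Measurable r₁)
    (hρ : Measurable ρ) (hρr₁ : ∀ᵐ ω ∂μ[|B], ρ (V ω) = r₁ (V ω))
    (hr₁_mem : ∀ᵐ ω ∂μ[|B], r₁ (V ω) ∈ Set.Icc 0 1)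
    (hodds : ∀ᵐ v ∂μ.map V, r₀ v * (1 - r₁ v) = c * (r₁ v * (1 - r₀ v))) :
    ∀ᵐ ω ∂μ, r₀ (V ω) = c * ρ (V ω) / (c * ρ (V ω) + 1 - ρ (V ω)) := by
  have hmV := hV.comap_le
  have hVset : ∀ {N : Set 𝒱}, MeasurableSet N →
      MeasurableSet[MeasurableSpace.comap V inferInstance] (V ⁻¹' N) := fun hN => ⟨_, hN, rfl⟩
  filter_upwards [(ae_map_iff hV.aemeasurable
      (measurableSet_eq_fun (by fun_prop) (by fun_prop))).mp hodds,
    ae_of_ae_cond_of_condExp_pos hmV hB hsel (hVset (measurableSet_eq_fun hρ hr₁)) hρr₁,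
    ae_of_ae_cond_of_condExp_pos hmV hB hsel (hVset (hr₁ measurableSet_Icc)) hr₁_mem]
    with ω hodds_ω hρ_ω hr₁_ω
  rw [hρ_ω]
  exact eq_div_of_odds_ratio_eq hc hr₁_ω.1 hr₁_ω.2 hodds_ω

end Tilting

theorem lemma1_identification_TATE_sensitivity_general
    {Ω : Type*} [MeasurableSpace Ω] [StandardBorelSpace Ω]
    {𝒳 : Type*} [MeasurableSpace 𝒳]
    {𝒱 : Type*} [MeasurableSpace 𝒱]
    (P : Measure Ω) [IsProbabilityMeasure P]
    -- observed data: source indicator, covariate, treatment, outcome; potential outcomes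
    (S A Y Y0 Y1 : Ω → ℝ) (X : Ω → 𝒳) (ψ : 𝒳 → 𝒱)
    (hS : Measurable S) (hA : Measurable A)
    (hY0 : Measurable Y0) (hY1 : Measurable Y1) (hX : Measurable X) (hψ : Measurable ψ)
    (hSbin : ∀ ω, S ω = 0 ∨ S ω = 1) (hAbin : ∀ ω, A ω = 0 ∨ A ω = 1)
    (hY0bin : ∀ ω, Y0 ω = 0 ∨ Y0 ω = 1) (hY1bin : ∀ ω, Y1 ω = 0 ∨ Y1 ω = 1)
    -- the given treatment level a ∈ {0,1} and its potential outcome Y⁽ᵃ⁾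
    (a : ℝ) (ha : a = 0 ∨ a = 1) (Ya : Ω → ℝ)
    (hYa0 : a = 0 → Ya = Y0) (hYa1 : a = 1 → Ya = Y1)
    -- Assumption 1 (SUTVA on the source)
    (hSUTVA : ∀ ω, S ω = 1 → ((A ω = 1 → Y ω = Y1 ω) ∧ (A ω = 0 → Y ω = Y0 ω)))
    -- Assumption 1 (strong ignorability on the source): (Y⁽⁰⁾,Y⁽¹⁾) ⟂ A | X under P(·|S=1)
    (hIgn : CondIndepFun (MeasurableSpace.comap X inferInstance) hX.comap_le
      (fun ω => (Y0 ω, Y1 ω)) A (P[|S ⁻¹' {1}]))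
    -- propensity score π(x) = P(A = 1 | X = x, S = 1) with 0 < π(X) < 1 a.s.
    (pi : 𝒳 → ℝ)
    (hpiver : (fun ω => pi (X ω)) =ᵐ[P[|S ⁻¹' {1}]]
      (P[|S ⁻¹' {1}])[A | MeasurableSpace.comap X inferInstance])
    (hpos : ∀ᵐ ω ∂(P[|S ⁻¹' {1}]), 0 < pi (X ω) ∧ pi (X ω) < 1)
    -- Assumption 2 (positivity of S): P(S=1 | V) > 0 a.s. and P(S=0) > 0
    (hsel : ∀ᵐ ω ∂P, 0 < (P[S | MeasurableSpace.comap (fun ω => ψ (X ω)) inferInstance]) ω)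
    -- nuisance functions: μ_a(x) = E[Y | X = x, A = a, S = 1]
    (mu : 𝒳 → ℝ) (hmu : Measurable mu)
    (hmuver : (fun ω => mu (X ω)) =ᵐ[P[|S ⁻¹' {1} ∩ A ⁻¹' {a}]]
      (P[|S ⁻¹' {1} ∩ A ⁻¹' {a}])[Y | MeasurableSpace.comap X inferInstance])
    -- ρ_a(v) = E[μ_a(X) | V = v, S = 1]
    (rho : 𝒱 → ℝ) (hrho : Measurable rho)
    (hrhover : (fun ω => rho (ψ (X ω))) =ᵐ[P[|S ⁻¹' {1}]]
      (P[|S ⁻¹' {1}])[(fun ω => mu (X ω)) | MeasurableSpace.comap (fun ω => ψ (X ω)) inferInstance])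
    -- binary exponential-tilting sensitivity model with parameter γ_a:
    -- r_s(v) = P(Y⁽ᵃ⁾ = 1 | V = v, S = s) and r₀(1−r₁) = e^{γ} r₁ (1−r₀) a.e.
    (γ : ℝ) (r0 r1 : 𝒱 → ℝ) (hr0m : Measurable r0) (hr1m : Measurable r1)
    (hr0ver : (fun ω => r0 (ψ (X ω))) =ᵐ[P[|S ⁻¹' {0}]]
      (P[|S ⁻¹' {0}])[Ya | MeasurableSpace.comap (fun ω => ψ (X ω)) inferInstance])
    (hr1ver : (fun ω => r1 (ψ (X ω))) =ᵐ[P[|S ⁻¹' {1}]]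
      (P[|S ⁻¹' {1}])[Ya | MeasurableSpace.comap (fun ω => ψ (X ω)) inferInstance])
    (htilt : ∀ᵐ v ∂(Measure.map (fun ω => ψ (X ω)) P),
      r0 v * (1 - r1 v) = Real.exp γ * (r1 v * (1 - r0 v))) :
    ∫ ω, Ya ω ∂(P[|S ⁻¹' {0}]) =
      ∫ ω, Real.exp γ * rho (ψ (X ω)) /
        (Real.exp γ * rho (ψ (X ω)) + 1 - rho (ψ (X ω))) ∂(P[|S ⁻¹' {0}]) := by
  have hmVX := (hψ.comp (comap_measurable X)).comap_le
  have hS₁ : MeasurableSet (S ⁻¹' {1}) := hS (measurableSet_singleton 1)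
  have hAa : MeasurableSet (A ⁻¹' {a}) := hA (measurableSet_singleton a)
  obtain ⟨hYam, hYabin, hIgnYa, hSUTVAa⟩ : Measurable Ya ∧ (∀ ω, Ya ω = 0 ∨ Ya ω = 1) ∧
      CondIndepFun (MeasurableSpace.comap X inferInstance) hX.comap_le Ya A (P[|S ⁻¹' {1}]) ∧
      ∀ ω, S ω = 1 → A ω = a → Y ω = Ya ω := by
    rcases ha with rfl | rfl
    · rw [hYa0 rfl]
      exact ⟨hY0, hY0bin, hIgn.comp measurable_fst measurable_id, fun ω h => (hSUTVA ω h).2⟩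
    · rw [hYa1 rfl]
      exact ⟨hY1, hY1bin, hIgn.comp measurable_snd measurable_id, fun ω h => (hSUTVA ω h).1⟩
  have hYYa : Y =ᵐ[P[|S ⁻¹' {1} ∩ A ⁻¹' {a}]] Ya := by
    filter_upwards [ae_cond_mem (hS₁.inter hAa)] with ω ⟨hω₁, hωa⟩ using hSUTVAa ω hω₁ hωa
  have hmu_ce := hIgnYa.ae_eq_condExp_of_ae_eq_condExp_cond hYam hYabin hA hAbin
    (by filter_upwards [hpiver, hpos] with ω h₁ h₂; rwa [← h₁]) ha
    (hmu.comp (comap_measurable X)).stronglyMeasurable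
    (by rw [cond_cond_eq_cond_inter hS₁ hAa]; exact hmuver.trans (condExp_congr_ae hYYa))
  have hrho_eq : ∀ᵐ ω ∂(P[|S ⁻¹' {1}]), rho (ψ (X ω)) = r1 (ψ (X ω)) :=
    hrhover.trans ((condExp_congr_ae hmu_ce).trans
      ((condExp_condExp_of_le hmVX hX.comap_le).trans hr1ver.symm))
  have hr1_mem : ∀ᵐ ω ∂(P[|S ⁻¹' {1}]), r1 (ψ (X ω)) ∈ Set.Icc 0 1 := by
    filter_upwards [hr1ver, condExp_mem_Icc (hmVX.trans hX.comap_le)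
      (hYam.integrable_of_binary hYabin)
      (ae_of_all _ fun ω => by rcases hYabin ω with h | h <;> simp [h])] with ω h₁ h₂
    rwa [h₁]
  have hformula := ae_eq_div_of_odds_ratio_of_ae_cond (hψ.comp hX) hS₁
    (by rwa [indicator_preimage_one_eq_self hSbin]) (exp_pos γ) hr0m hr1m hrho hrho_eq hr1_mem htilt
  calc ∫ ω, Ya ω ∂(P[|S ⁻¹' {0}])
      = ∫ ω, r0 (ψ (X ω)) ∂(P[|S ⁻¹' {0}]) :=
        (integral_condExp (hmVX.trans hX.comap_le)).symm.trans (integral_congr_ae hr0ver.symm)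
    _ = _ := integral_congr_ae (cond_absolutelyContinuous.ae_le hformula)

/-- **Lemma 1** (Identification of the target mean potential outcome under the binary
exponential-tilting sensitivity model). -/
theorem lemma1_identification_TATE_sensitivity
    {Ω : Type*} [MeasurableSpace Ω] [StandardBorelSpace Ω] [Nonempty Ω]
    {𝒳 : Type*} [MeasurableSpace 𝒳] [StandardBorelSpace 𝒳]
    {𝒱 : Type*} [MeasurableSpace 𝒱]
    (P : Measure Ω) [IsProbabilityMeasure P]
    -- observed data: source indicator, covariate, treatment, outcome; potential outcomes
    (S A Y Y0 Y1 : Ω → ℝ) (X : Ω → 𝒳) (ψ : 𝒳 → 𝒱)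
    (hS : Measurable S) (hA : Measurable A) (hY : Measurable Y)
    (hY0 : Measurable Y0) (hY1 : Measurable Y1) (hX : Measurable X) (hψ : Measurable ψ)
    (hSbin : ∀ ω, S ω = 0 ∨ S ω = 1) (hAbin : ∀ ω, A ω = 0 ∨ A ω = 1)
    (hY0bin : ∀ ω, Y0 ω = 0 ∨ Y0 ω = 1) (hY1bin : ∀ ω, Y1 ω = 0 ∨ Y1 ω = 1)
    (hPS1pos : 0 < P (S ⁻¹' {1})) (hPS1lt : P (S ⁻¹' {1}) < 1)
    -- the given treatment level a ∈ {0,1} and its potential outcome Y⁽ᵃ⁾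
    (a : ℝ) (ha : a = 0 ∨ a = 1) (Ya : Ω → ℝ)
    (hYa0 : a = 0 → Ya = Y0) (hYa1 : a = 1 → Ya = Y1)
    -- Assumption 1 (SUTVA on the source)
    (hSUTVA : ∀ ω, S ω = 1 → ((A ω = 1 → Y ω = Y1 ω) ∧ (A ω = 0 → Y ω = Y0 ω)))
    -- Assumption 1 (strong ignorability on the source): (Y⁽⁰⁾,Y⁽¹⁾) ⟂ A | X under P(·|S=1)
    (hIgn : CondIndepFun (MeasurableSpace.comap X inferInstance) hX.comap_le
      (fun ω => (Y0 ω, Y1 ω)) A (P[|S ⁻¹' {1}]))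
    -- propensity score π(x) = P(A = 1 | X = x, S = 1) with 0 < π(X) < 1 a.s.
    (pi : 𝒳 → ℝ) (hpi : Measurable pi)
    (hpiver : (fun ω => pi (X ω)) =ᵐ[P[|S ⁻¹' {1}]]
      (P[|S ⁻¹' {1}])[A | MeasurableSpace.comap X inferInstance])
    (hpos : ∀ᵐ ω ∂(P[|S ⁻¹' {1}]), 0 < pi (X ω) ∧ pi (X ω) < 1)
    -- Assumption 2 (positivity of S): P(S=1 | V) > 0 a.s. and P(S=0) > 0
    (hsel : ∀ᵐ ω ∂P, 0 < (P[S | MeasurableSpace.comap (fun ω => ψ (X ω)) inferInstance]) ω)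
    (hPS0pos : 0 < P (S ⁻¹' {0}))
    -- nuisance functions: μ_a(x) = E[Y | X = x, A = a, S = 1]
    (mu : 𝒳 → ℝ) (hmu : Measurable mu)
    (hmuver : (fun ω => mu (X ω)) =ᵐ[P[|S ⁻¹' {1} ∩ A ⁻¹' {a}]]
      (P[|S ⁻¹' {1} ∩ A ⁻¹' {a}])[Y | MeasurableSpace.comap X inferInstance])
    -- ρ_a(v) = E[μ_a(X) | V = v, S = 1]
    (rho : 𝒱 → ℝ) (hrho : Measurable rho)
    (hrhover : (fun ω => rho (ψ (X ω))) =ᵐ[P[|S ⁻¹' {1}]]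
      (P[|S ⁻¹' {1}])[(fun ω => mu (X ω)) | MeasurableSpace.comap (fun ω => ψ (X ω)) inferInstance])
    -- binary exponential-tilting sensitivity model with parameter γ_a:
    -- r_s(v) = P(Y⁽ᵃ⁾ = 1 | V = v, S = s) and r₀(1−r₁) = e^{γ} r₁ (1−r₀) a.e.
    (γ : ℝ) (r0 r1 : 𝒱 → ℝ) (hr0m : Measurable r0) (hr1m : Measurable r1)
    (hr0ver : (fun ω => r0 (ψ (X ω))) =ᵐ[P[|S ⁻¹' {0}]]
      (P[|S ⁻¹' {0}])[Ya | MeasurableSpace.comap (fun ω => ψ (X ω)) inferInstance])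
    (hr1ver : (fun ω => r1 (ψ (X ω))) =ᵐ[P[|S ⁻¹' {1}]]
      (P[|S ⁻¹' {1}])[Ya | MeasurableSpace.comap (fun ω => ψ (X ω)) inferInstance])
    (htilt : ∀ᵐ v ∂(Measure.map (fun ω => ψ (X ω)) P),
      r0 v * (1 - r1 v) = Real.exp γ * (r1 v * (1 - r0 v))) :
    ∫ ω, Ya ω ∂(P[|S ⁻¹' {0}]) =
      ∫ ω, Real.exp γ * rho (ψ (X ω)) /
        (Real.exp γ * rho (ψ (X ω)) + 1 - rho (ψ (X ω))) ∂(P[|S ⁻¹' {0}]) :=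
  lemma1_identification_TATE_sensitivity_general P S A Y Y0 Y1 X ψ hS hA hY0 hY1 hX hψ hSbin hAbin
    hY0bin hY1bin a ha Ya hYa0 hYa1 hSUTVA hIgn pi hpiver hpos hsel mu hmu hmuver rho hrho hrhover γ
    r0 r1 hr0m hr1m hr0ver hr1ver htilt
end

section
/- Negative correlation of squared multinomial bootstrap weights (verification of condition (W3′) in the proof of Theorem B.2). Let n ≥ 1 and let W_i = #{k ≤ n : C_k = i} be the multinomial bootstrap weights. Then for all i ≠ j in {1,…,n}, Cov(W_i², W_j²) = E[W_i² W_j²] − E[W_i²]·E[W_j²] ≤ 0. -/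
/-!
Write `W_a = #{k | C_k = a}`. Expanding powers, `W_a ^ r * W_b ^ s` is the sum over index tuples
`f : Fin r → ι`, `g : Fin s → ι` of the indicators of `{C = a on im f} ∩ {C = b on im g}`. When
`im f` and `im g` are disjoint the two events are independent; otherwise the intersection is empty
because `a ≠ b`. So each term has probability at most the product of the two probabilities, and
summing gives `E[W_a ^ r * W_b ^ s] ≤ E[W_a ^ r] * E[W_b ^ s]`.
-/

open MeasureTheory ProbabilityTheory Finset

theorem card_fiber_pow_eq_sum_indicator {Ω ι α : Type*} [Fintype ι] [DecidableEq ι]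
    [DecidableEq α] (C : ι → Ω → α) (a : α) (r : ℕ) (ω : Ω) :
    (#{k | C k ω = a} : ℝ) ^ r =
      ∑ f : Fin r → ι, {ω | ∀ k ∈ univ.image f, C k ω = a}.indicator 1 ω := by
  simp only [natCast_card_filter, Fintype.sum_pow, prod_boole, Set.indicator_apply,
    Set.mem_ofPred_eq, forall_mem_image, mem_univ, forall_const, Pi.one_apply]

section Occupancy

variable {Ω ι α : Type*} [MeasurableSpace Ω] {P : Measure Ω}
  [MeasurableSpace α] [MeasurableSingletonClass α] {C : ι → Ω → α}

theorem measurableSet_forall_mem_eq (hC : ∀ k, Measurable (C k)) (S : Finset ι) (a : α) :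
    MeasurableSet {ω | ∀ k ∈ S, C k ω = a} := by
  simp only [Set.ofPred_forall]
  exact S.measurableSet_biInter fun k _ => hC k (measurableSet_singleton a)

theorem measureReal_forall_mem_eq_inter_le (hC : ∀ k, Measurable (C k)) (hindep : iIndepFun C P)
    {a b : α} (hab : a ≠ b) (S T : Finset ι) :
    P.real ({ω | ∀ k ∈ S, C k ω = a} ∩ {ω | ∀ k ∈ T, C k ω = b}) ≤
      P.real {ω | ∀ k ∈ S, C k ω = a} * P.real {ω | ∀ k ∈ T, C k ω = b} := by
  by_cases hST : Disjoint S T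
  · have hpi (U : Finset ι) (c : α) : {ω | ∀ k ∈ U, C k ω = c} =
        (fun ω (k : U) => C k ω) ⁻¹' Set.univ.pi fun _ => {c} := by
      ext ω; simp
    have hind := (hindep.indepFun_finset S T hST hC).measure_inter_preimage_eq_mul
      _ _ (MeasurableSet.univ_pi fun _ => measurableSet_singleton a)
      (MeasurableSet.univ_pi fun _ => measurableSet_singleton b)
    rw [hpi S, hpi T]
    simp only [measureReal_def, hind, ENNReal.toReal_mul, le_refl]
  · obtain ⟨k, hkS, hkT⟩ := Finset.not_disjoint_iff.mp hST
    have hempty : {ω | ∀ k ∈ S, C k ω = a} ∩ {ω | ∀ k ∈ T, C k ω = b} = ∅ :=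
      Set.eq_empty_of_forall_notMem fun ω ⟨ha, hb⟩ => hab ((ha k hkS).symm.trans (hb k hkT))
    rw [hempty, measureReal_empty]
    positivity

theorem integral_sum_indicator_one [IsFiniteMeasure P] {κ : Type*} (s : Finset κ)
    {A : κ → Set Ω} (hA : ∀ i ∈ s, MeasurableSet (A i)) :
    ∫ ω, ∑ i ∈ s, (A i).indicator (1 : Ω → ℝ) ω ∂P = ∑ i ∈ s, P.real (A i) := by
  rw [integral_finsetSum s fun i hi => ?_]
  · exact sum_congr rfl fun i hi => integral_indicator_one (hA i hi)
  · exact (integrable_const (1 : ℝ)).indicator (hA i hi)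

variable [Fintype ι] [DecidableEq ι] [DecidableEq α]

section Integral

variable [IsFiniteMeasure P]

theorem integral_card_fiber_pow (hC : ∀ k, Measurable (C k)) (a : α) (r : ℕ) :
    ∫ ω, (#{k | C k ω = a} : ℝ) ^ r ∂P =
      ∑ f : Fin r → ι, P.real {ω | ∀ k ∈ univ.image f, C k ω = a} := by
  simp only [card_fiber_pow_eq_sum_indicator]
  exact integral_sum_indicator_one _ fun f _ => measurableSet_forall_mem_eq hC _ a

theorem integral_card_fiber_pow_mul_pow (hC : ∀ k, Measurable (C k)) (a b : α) (r s : ℕ) :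
    ∫ ω, (#{k | C k ω = a} : ℝ) ^ r * (#{k | C k ω = b} : ℝ) ^ s ∂P =
      ∑ f : Fin r → ι, ∑ g : Fin s → ι,
        P.real ({ω | ∀ k ∈ univ.image f, C k ω = a} ∩ {ω | ∀ k ∈ univ.image g, C k ω = b}) := by
  have hinter (A B : Set Ω) (ω : Ω) :
      A.indicator (1 : Ω → ℝ) ω * B.indicator 1 ω = (A ∩ B).indicator 1 ω := by
    rw [Set.inter_indicator_one, Pi.mul_apply]
  simp only [card_fiber_pow_eq_sum_indicator, Fintype.sum_mul_sum, hinter,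
    ← Fintype.sum_prod_type']
  exact integral_sum_indicator_one _ fun fg _ =>
    (measurableSet_forall_mem_eq hC _ a).inter (measurableSet_forall_mem_eq hC _ b)

end Integral

theorem integral_card_fiber_pow_mul_pow_le (hC : ∀ k, Measurable (C k))
    (hindep : iIndepFun C P) {a b : α} (hab : a ≠ b) (r s : ℕ) :
    ∫ ω, (#{k | C k ω = a} : ℝ) ^ r * (#{k | C k ω = b} : ℝ) ^ s ∂P ≤
      (∫ ω, (#{k | C k ω = a} : ℝ) ^ r ∂P) * ∫ ω, (#{k | C k ω = b} : ℝ) ^ s ∂P := by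
  have := hindep.isProbabilityMeasure
  rw [integral_card_fiber_pow_mul_pow hC, integral_card_fiber_pow hC,
    integral_card_fiber_pow hC, Fintype.sum_mul_sum]
  gcongr with f _ g _
  exact measureReal_forall_mem_eq_inter_le hC hindep hab _ _

end Occupancy

theorem multinomial_bootstrap_weight_squares_neg_corr_general
    {Ω : Type*} [MeasurableSpace Ω] (P : Measure Ω)
    (n : ℕ) (C : Fin n → Ω → Fin n)
    (hCmeas : ∀ k, Measurable (C k))
    (hindep : iIndepFun C P)
    (i j : Fin n) (hij : i ≠ j) :
    (∫ ω, ((Finset.univ.filter (fun k => C k ω = i)).card : ℝ)^2 *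
          ((Finset.univ.filter (fun k => C k ω = j)).card : ℝ)^2 ∂P)
      - (∫ ω, ((Finset.univ.filter (fun k => C k ω = i)).card : ℝ)^2 ∂P) *
        (∫ ω, ((Finset.univ.filter (fun k => C k ω = j)).card : ℝ)^2 ∂P) ≤ 0 :=
  sub_nonpos.mpr (integral_card_fiber_pow_mul_pow_le hCmeas hindep hij 2 2)

/-- **Negative correlation of squared multinomial bootstrap weights** (condition (W3′) in the
proof of Theorem B.2): if `C_1, …, C_n` are i.i.d. uniform on `{1, …, n}` and
`W_i = #{k : C_k = i}`, then for `i ≠ j`, `Cov(W_i², W_j²) ≤ 0`. -/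
theorem multinomial_bootstrap_weight_squares_neg_corr
    {Ω : Type*} [MeasurableSpace Ω] (P : Measure Ω) [IsProbabilityMeasure P]
    (n : ℕ) (hn : 1 ≤ n) (C : Fin n → Ω → Fin n)
    (hCmeas : ∀ k, Measurable (C k))
    (hindep : iIndepFun C P)
    (hunif : ∀ k, ∀ i : Fin n, P (C k ⁻¹' {i}) = 1 / n)
    (i j : Fin n) (hij : i ≠ j) :
    (∫ ω, ((Finset.univ.filter (fun k => C k ω = i)).card : ℝ)^2 *
          ((Finset.univ.filter (fun k => C k ω = j)).card : ℝ)^2 ∂P)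
      - (∫ ω, ((Finset.univ.filter (fun k => C k ω = i)).card : ℝ)^2 ∂P) *
        (∫ ω, ((Finset.univ.filter (fun k => C k ω = j)).card : ℝ)^2 ∂P) ≤ 0 :=
  multinomial_bootstrap_weight_squares_neg_corr_general P n C hCmeas hindep i j hij
end

section
/- Consistency of the outcome-regression plug-in estimator with deterministic nuisance sequences (consistency part of Theorem 1 in deterministic-nuisance form). Let ν be a probability measure on a standard Borel space 𝒱 (the law of the shared covariate V in the target population, i.e., under P(·|S=0)), let ρ : 𝒱 → [0,1] be measurable, and let γ ∈ ℝ. Let V_1, V_2, … be i.i.d. with law ν, and let g_n : 𝒱 → [0,1] be measurable functions with ∫ |g_n − ρ| dν → 0 as n → ∞. Then the plug-in estimator θ̂_n = (1/n) Σ_{i=1}^n T_γ(g_n(V_i)) converges in probability to θ(γ) = ∫ T_γ(ρ(v)) ν(dv), where T_γ(t) = e^γ t/(e^γ t + 1 − t). -/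
/-!
With `T_γ = tilt γ`, write `θ̂_n - θ` as the empirical mean of `T_γ ∘ g_n - T_γ ∘ ρ` plus the
empirical mean of `T_γ ∘ ρ` minus `θ`. Since `g_n` changes with `n`, the strong law does not
apply to the first term; instead, `T_γ` is `e^{|γ|}`-Lipschitz on `[0,1]`, so by the triangle
inequality and the common law `ν` of the `V_i` its `L¹(Q)`-norm is at most
`e^{|γ|} ∫ |g_n - ρ| dν → 0`, and `L¹` convergence gives convergence in probability. The second
term tends to `0` almost surely by the strong law of large numbers, hence in probability, and
convergence in probability is preserved by sums.
-/

open MeasureTheory ProbabilityTheory Real Filter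
open scoped ENNReal Topology

noncomputable def tilt (γ t : ℝ) : ℝ := exp γ * t / (exp γ * t + 1 - t)

section tilt

variable {γ s t : ℝ}

lemma exp_min_le_tilt_denom (ht : t ∈ Set.Icc 0 1) :
    exp (min 0 γ) ≤ exp γ * t + 1 - t := by
  rcases le_total 0 γ with hγ | hγ
  · rw [min_eq_left hγ, exp_zero]
    nlinarith [one_le_exp hγ, ht.1]
  · rw [min_eq_right hγ]
    nlinarith [exp_le_one_iff.mpr hγ, ht.1, ht.2]

lemma tilt_denom_pos (ht : t ∈ Set.Icc 0 1) : 0 < exp γ * t + 1 - t :=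
  (exp_pos _).trans_le (exp_min_le_tilt_denom ht)

lemma tilt_nonneg (ht : t ∈ Set.Icc 0 1) : 0 ≤ tilt γ t :=
  div_nonneg (mul_nonneg (exp_pos γ).le ht.1) (tilt_denom_pos ht).le

lemma tilt_le_one (ht : t ∈ Set.Icc 0 1) : tilt γ t ≤ 1 :=
  (div_le_one (tilt_denom_pos ht)).mpr (by linarith [ht.2])

lemma abs_tilt_sub_tilt_le (hs : s ∈ Set.Icc 0 1) (ht : t ∈ Set.Icc 0 1) :
    |tilt γ s - tilt γ t| ≤ exp |γ| * |s - t| := by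
  have hds := tilt_denom_pos (γ := γ) hs
  have hdt := tilt_denom_pos (γ := γ) ht
  have hsub : tilt γ s - tilt γ t
      = exp γ * (s - t) / ((exp γ * s + 1 - s) * (exp γ * t + 1 - t)) := by
    unfold tilt
    field_simp
    ring
  have hprod : exp γ ≤ exp |γ| * ((exp γ * s + 1 - s) * (exp γ * t + 1 - t)) := by
    have hexp : exp γ = exp |γ| * (exp (min 0 γ) * exp (min 0 γ)) := by
      rw [← exp_add, ← exp_add]
      congr 1
      rcases le_total 0 γ with hγ | hγ
      · rw [min_eq_left hγ, abs_of_nonneg hγ]; ring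
      · rw [min_eq_right hγ, abs_of_nonpos hγ]; ring
    calc exp γ = exp |γ| * (exp (min 0 γ) * exp (min 0 γ)) := hexp
      _ ≤ _ := by
        gcongr
        · exact exp_min_le_tilt_denom hs
        · exact exp_min_le_tilt_denom ht
  rw [hsub, abs_div, abs_mul, abs_of_pos (exp_pos γ), abs_of_pos (mul_pos hds hdt),
    div_le_iff₀ (mul_pos hds hdt)]
  calc exp γ * |s - t| ≤ exp |γ| * ((exp γ * s + 1 - s) * (exp γ * t + 1 - t)) * |s - t| := by
        gcongr
    _ = _ := by ring

lemma measurable_tilt (γ : ℝ) : Measurable (tilt γ) := by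
  unfold tilt
  fun_prop

lemma eLpNorm_tilt_comp_sub_le {𝒱 : Type*} [MeasurableSpace 𝒱] {ν : Measure 𝒱}
    [IsFiniteMeasure ν] (γ : ℝ) {g h : 𝒱 → ℝ} (hg : AEMeasurable g ν) (hh : AEMeasurable h ν)
    (hg₀₁ : ∀ v, g v ∈ Set.Icc 0 1) (hh₀₁ : ∀ v, h v ∈ Set.Icc 0 1) :
    eLpNorm (tilt γ ∘ g - tilt γ ∘ h) 1 ν ≤ ENNReal.ofReal (exp |γ| * ∫ v, |g v - h v| ∂ν) := by
  have hint : Integrable (g - h) ν :=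
    (Integrable.of_mem_Icc 0 1 hg (ae_of_all _ hg₀₁)).sub
      (Integrable.of_mem_Icc 0 1 hh (ae_of_all _ hh₀₁))
  calc eLpNorm (tilt γ ∘ g - tilt γ ∘ h) 1 ν
      ≤ ENNReal.ofReal (exp |γ|) * eLpNorm (g - h) 1 ν :=
        eLpNorm_le_mul_eLpNorm_of_ae_le_mul
          (ae_of_all _ fun v => abs_tilt_sub_tilt_le (hg₀₁ v) (hh₀₁ v)) 1
    _ = ENNReal.ofReal (exp |γ|) * ENNReal.ofReal (∫ v, |g v - h v| ∂ν) := by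
        rw [eLpNorm_one_eq_lintegral_enorm, ← ofReal_integral_norm_eq_lintegral_enorm hint]
        rfl
    _ = ENNReal.ofReal (exp |γ| * ∫ v, |g v - h v| ∂ν) :=
        (ENNReal.ofReal_mul (exp_pos _).le).symm

end tilt

noncomputable def empiricalMean {Ω 𝒱 : Type*} (f : 𝒱 → ℝ) (V : ℕ → Ω → 𝒱) (n : ℕ) (ω : Ω) :
    ℝ :=
  (n : ℝ)⁻¹ * ∑ i ∈ Finset.range n, f (V i ω)

section empiricalMean

variable {Ω 𝒱 : Type*}

lemma empiricalMean_sub (f h : 𝒱 → ℝ) (V : ℕ → Ω → 𝒱) (n : ℕ) :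
    empiricalMean (f - h) V n = empiricalMean f V n - empiricalMean h V n := by
  ext ω
  simp only [empiricalMean, Pi.sub_apply, Finset.sum_sub_distrib, mul_sub]

variable [MeasurableSpace Ω] [MeasurableSpace 𝒱] {Q : Measure Ω} {ν : Measure 𝒱}
  {V : ℕ → Ω → 𝒱}

lemma aestronglyMeasurable_empiricalMean (hV : ∀ i, AEMeasurable (V i) Q)
    (hlaw : ∀ i, Q.map (V i) = ν) {f : 𝒱 → ℝ} (hf : AEStronglyMeasurable f ν) (n : ℕ) :
    AEStronglyMeasurable (empiricalMean f V n) Q :=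
  (Finset.aestronglyMeasurable_fun_sum _ fun i _ =>
    ((hlaw i).symm ▸ hf).comp_aemeasurable (hV i)).const_mul _

lemma eLpNorm_empiricalMean_le {p : ℝ≥0∞} (hp : 1 ≤ p) (hV : ∀ i, AEMeasurable (V i) Q)
    (hlaw : ∀ i, Q.map (V i) = ν) {f : 𝒱 → ℝ} (hf : AEStronglyMeasurable f ν) (n : ℕ) :
    eLpNorm (empiricalMean f V n) p Q ≤ eLpNorm f p ν := by
  have hterm : ∀ i, eLpNorm (f ∘ V i) p Q = eLpNorm f p ν := fun i => by
    rw [← eLpNorm_map_measure ((hlaw i).symm ▸ hf) (hV i), hlaw i]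
  have hmeas : ∀ i, AEStronglyMeasurable (f ∘ V i) Q := fun i =>
    ((hlaw i).symm ▸ hf).comp_aemeasurable (hV i)
  have hmean : empiricalMean f V n = (n : ℝ)⁻¹ • ∑ i ∈ Finset.range n, f ∘ V i := by
    ext ω
    simp [empiricalMean]
  calc eLpNorm (empiricalMean f V n) p Q
      = ‖(n : ℝ)⁻¹‖ₑ * eLpNorm (∑ i ∈ Finset.range n, f ∘ V i) p Q := by
        rw [hmean, eLpNorm_const_smul]
    _ ≤ ‖(n : ℝ)⁻¹‖ₑ * ∑ i ∈ Finset.range n, eLpNorm (f ∘ V i) p Q := by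
        gcongr
        exact eLpNorm_sum_le (fun i _ => hmeas i) hp
    _ = ‖(n : ℝ)⁻¹‖ₑ * n * eLpNorm f p ν := by
        simp only [hterm, Finset.sum_const, Finset.card_range, nsmul_eq_mul, mul_assoc]
    _ ≤ eLpNorm f p ν := by
        rcases eq_or_ne n 0 with rfl | hn
        · simp
        · rw [enorm_inv (by exact_mod_cast hn), Real.enorm_natCast,
            ENNReal.inv_mul_cancel (by exact_mod_cast hn) (ENNReal.natCast_ne_top n), one_mul]

lemma tendstoInMeasure_empiricalMean_zero (hV : ∀ i, AEMeasurable (V i) Q)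
    (hlaw : ∀ i, Q.map (V i) = ν) {f : ℕ → 𝒱 → ℝ} (hf : ∀ n, AEStronglyMeasurable (f n) ν)
    (hf₀ : Tendsto (fun n => eLpNorm (f n) 1 ν) atTop (𝓝 0)) :
    TendstoInMeasure Q (fun n => empiricalMean (f n) V n) atTop 0 := by
  refine MeasureTheory.tendstoInMeasure_of_tendsto_eLpNorm one_ne_zero
    (fun n => aestronglyMeasurable_empiricalMean hV hlaw (hf n) n) aestronglyMeasurable_const ?_
  refine tendsto_of_tendsto_of_tendsto_of_le_of_le tendsto_const_nhds hf₀ (fun _ => zero_le)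
    fun n => ?_
  simpa only [sub_zero] using eLpNorm_empiricalMean_le le_rfl hV hlaw (hf n) n

theorem tendstoInMeasure_empiricalMean_integral [IsProbabilityMeasure Q]
    (hV : ∀ i, AEMeasurable (V i) Q)
    (hindep : Pairwise fun i j => IndepFun (V i) (V j) Q) (hlaw : ∀ i, Q.map (V i) = ν)
    {f : 𝒱 → ℝ} (hf : Measurable f) (hfi : Integrable f ν) :
    TendstoInMeasure Q (empiricalMean f V) atTop (fun _ => ∫ v, f v ∂ν) := by
  have hident : ∀ i, IdentDistrib (V i) (V 0) Q Q := fun i =>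
    ⟨hV i, hV 0, by rw [hlaw i, hlaw 0]⟩
  have hint : Integrable (f ∘ V 0) Q :=
    (integrable_map_measure ((hlaw 0).symm ▸ hfi.aestronglyMeasurable) (hV 0)).mp
      ((hlaw 0).symm ▸ hfi)
  have hmean : ∫ ω, (f ∘ V 0) ω ∂Q = ∫ v, f v ∂ν := by
    rw [← hlaw 0, integral_map (hV 0) ((hlaw 0).symm ▸ hfi.aestronglyMeasurable)]
    rfl
  have hslln := strong_law_ae_real (fun i => f ∘ V i) hint
    (fun i j hij => (hindep hij).comp hf hf) (fun i => (hident i).comp hf)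
  refine tendstoInMeasure_of_tendsto_ae
    (aestronglyMeasurable_empiricalMean hV hlaw hfi.aestronglyMeasurable) ?_
  filter_upwards [hslln] with ω hω
  rw [← hmean]
  simpa only [empiricalMean, inv_mul_eq_div, Function.comp_apply] using hω

end empiricalMean

theorem MeasureTheory.TendstoInMeasure.add {α ι E : Type*} [MeasurableSpace α] {μ : Measure α}
    [SeminormedAddCommGroup E] {l : Filter ι} {f f' : ι → α → E} {g g' : α → E}
    (hf : TendstoInMeasure μ f l g) (hf' : TendstoInMeasure μ f' l g') :
    TendstoInMeasure μ (f + f') l (g + g') := by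
  rw [tendstoInMeasure_iff_norm] at *
  intro ε hε
  have hsplit : ∀ i, {x | ε ≤ ‖(f + f') i x - (g + g') x‖}
      ⊆ {x | ε / 2 ≤ ‖f i x - g x‖} ∪ {x | ε / 2 ≤ ‖f' i x - g' x‖} := by
    intro i x hx
    by_contra hcon
    simp only [Set.mem_union, Set.mem_ofPred_eq, Pi.add_apply, not_or, not_le] at hx hcon
    have := norm_add_le (f i x - g x) (f' i x - g' x)
    rw [← add_sub_add_comm] at this
    linarith
  have hlim := (hf (ε / 2) (half_pos hε)).add (hf' (ε / 2) (half_pos hε))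
  rw [add_zero] at hlim
  exact tendsto_of_tendsto_of_tendsto_of_le_of_le tendsto_const_nhds hlim (fun _ => zero_le)
    fun i => (measure_mono (hsplit i)).trans (measure_union_le _ _)

theorem OR_plugin_estimator_consistency_general
    {Ω' : Type*} [MeasurableSpace Ω'] (Q : Measure Ω') [IsProbabilityMeasure Q]
    {𝒱 : Type*} [MeasurableSpace 𝒱]
    (ν : Measure 𝒱) [IsProbabilityMeasure ν]
    (γ : ℝ)
    (rho : 𝒱 → ℝ) (hrho : Measurable rho) (hrhoRange : ∀ v, 0 ≤ rho v ∧ rho v ≤ 1)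
    -- i.i.d. sequence V_1, V_2, … with law ν
    (V : ℕ → Ω' → 𝒱) (hVmeas : ∀ i, Measurable (V i))
    (hViid : iIndepFun V Q)
    (hVlaw : ∀ i, Measure.map (V i) Q = ν)
    -- measurable estimated regressions g_n with values in [0,1], converging to ρ in L¹(ν)
    (g : ℕ → 𝒱 → ℝ) (hg : ∀ n, Measurable (g n))
    (hgRange : ∀ n v, 0 ≤ g n v ∧ g n v ≤ 1)
    (hgL1 : Tendsto (fun n => ∫ v, |g n v - rho v| ∂ν) atTop (𝓝 0)) :
    ∀ ε > (0:ℝ),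
      Tendsto (fun (n : ℕ) => Q {ω | ε <
          |(n : ℝ)⁻¹ * (∑ i ∈ Finset.range n,
              Real.exp γ * g n (V i ω) / (Real.exp γ * g n (V i ω) + 1 - g n (V i ω)))
            - ∫ v, Real.exp γ * rho v / (Real.exp γ * rho v + 1 - rho v) ∂ν|})
        atTop (𝓝 0) := by
  have hV : ∀ i, AEMeasurable (V i) Q := fun i => (hVmeas i).aemeasurable
  have hbias : TendstoInMeasure Q
      (fun n => empiricalMean (tilt γ ∘ g n - tilt γ ∘ rho) V n) atTop 0 := by
    refine tendstoInMeasure_empiricalMean_zero hV hVlaw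
      (fun n => (((measurable_tilt γ).comp (hg n)).sub
        ((measurable_tilt γ).comp hrho)).aestronglyMeasurable) ?_
    refine tendsto_of_tendsto_of_tendsto_of_le_of_le tendsto_const_nhds ?_ (fun _ => zero_le)
      fun n => eLpNorm_tilt_comp_sub_le γ (hg n).aemeasurable hrho.aemeasurable
        (hgRange n) hrhoRange
    simpa using ENNReal.tendsto_ofReal (hgL1.const_mul (exp |γ|))
  have hlln : TendstoInMeasure Q (empiricalMean (tilt γ ∘ rho) V) atTop
      (fun _ => ∫ v, tilt γ (rho v) ∂ν) :=
    tendstoInMeasure_empiricalMean_integral hV (fun i j hij => hViid.indepFun hij) hVlaw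
      ((measurable_tilt γ).comp hrho)
      (Integrable.of_mem_Icc 0 1 ((measurable_tilt γ).comp hrho).aemeasurable
        (ae_of_all _ fun v => ⟨tilt_nonneg (hrhoRange v), tilt_le_one (hrhoRange v)⟩))
  have hplugin := tendstoInMeasure_iff_dist.mp (hbias.add hlln)
  intro ε hε
  refine tendsto_of_tendsto_of_tendsto_of_le_of_le tendsto_const_nhds (hplugin ε hε)
    (fun _ => zero_le) fun n => measure_mono fun ω hω => ?_
  simp only [Set.mem_ofPred_eq, empiricalMean_sub, Pi.add_apply, Pi.sub_apply, sub_add_cancel,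
    Pi.zero_apply, zero_add, Real.dist_eq] at hω ⊢
  exact hω.le

/-- **Consistency of the outcome-regression plug-in estimator** with deterministic nuisance
sequences (consistency part of Theorem 1): if `V_1, V_2, …` are i.i.d. with law `ν` and
`g_n → ρ` in `L¹(ν)`, then `θ̂_n = n⁻¹ Σ_{i<n} T_γ(g_n(V_i))` converges in probability to
`θ(γ) = ∫ T_γ(ρ) dν`, where `T_γ(t) = e^γ t/(e^γ t + 1 − t)` is the tilting map. -/
theorem OR_plugin_estimator_consistency
    {Ω' : Type*} [MeasurableSpace Ω'] (Q : Measure Ω') [IsProbabilityMeasure Q]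
    {𝒱 : Type*} [MeasurableSpace 𝒱] [StandardBorelSpace 𝒱]
    (ν : Measure 𝒱) [IsProbabilityMeasure ν]
    (γ : ℝ)
    (rho : 𝒱 → ℝ) (hrho : Measurable rho) (hrhoRange : ∀ v, 0 ≤ rho v ∧ rho v ≤ 1)
    -- i.i.d. sequence V_1, V_2, … with law ν
    (V : ℕ → Ω' → 𝒱) (hVmeas : ∀ i, Measurable (V i))
    (hViid : iIndepFun V Q)
    (hVlaw : ∀ i, Measure.map (V i) Q = ν)
    -- measurable estimated regressions g_n with values in [0,1], converging to ρ in L¹(ν)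
    (g : ℕ → 𝒱 → ℝ) (hg : ∀ n, Measurable (g n))
    (hgRange : ∀ n v, 0 ≤ g n v ∧ g n v ≤ 1)
    (hgL1 : Tendsto (fun n => ∫ v, |g n v - rho v| ∂ν) atTop (𝓝 0)) :
    ∀ ε > (0:ℝ),
      Tendsto (fun (n : ℕ) => Q {ω | ε <
          |(n : ℝ)⁻¹ * (∑ i ∈ Finset.range n,
              Real.exp γ * g n (V i ω) / (Real.exp γ * g n (V i ω) + 1 - g n (V i ω)))
            - ∫ v, Real.exp γ * rho v / (Real.exp γ * rho v + 1 - rho v) ∂ν|})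
        atTop (𝓝 0) :=
  OR_plugin_estimator_consistency_general Q ν γ rho hrho hrhoRange V hVmeas hViid hVlaw g hg hgRange
    hgL1
end
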